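/- For any x^U > 0 there exists a unique x_c ≤ 0 with 1 - tanh²(x_c) = (tanh(x^U) - tanh(x_c))/(x^U - x_c); i.e., the tangent line to tanh at x_c passes through the point (x^U, tanh(x^U)). -/

import Mathlib

/-!
The tangent line to `tanh` at `x`, evaluated at `t`, is `tanhTangent x t`.
For fixed `t ≥ 0`, `x ↦ tanhTangent x t` has derivative `-2 tanh x (1 - tanh² x) (t - x)`,
which is positive for `x < 0`, so it is strictly increasing on `(-∞, 0]`. At `x = 0` it equals
`t > tanh t`, while at `x = -(t + 1)` it is `≤ 0 < tanh t`; the intermediate value theorem and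
strict monotonicity give exactly one `x ≤ 0` with `tanhTangent x t = tanh t`.
-/

open Real Set

namespace Real

theorem one_sub_tanh_sq (x : ℝ) : 1 - tanh x ^ 2 = (cosh x ^ 2)⁻¹ := by
  have := cosh_pos x
  rw [tanh_eq_sinh_div_cosh]
  field_simp
  linear_combination cosh_sq_sub_sinh_sq x

theorem hasDerivAt_tanh (x : ℝ) : HasDerivAt tanh (1 - tanh x ^ 2) x := by
  have hcosh := (cosh_pos x).ne'
  rw [funext tanh_eq_sinh_div_cosh]
  refine ((hasDerivAt_sinh x).div (hasDerivAt_cosh x) hcosh).congr_deriv ?_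
  field_simp

theorem strictMono_tanh : StrictMono tanh :=
  strictMono_of_deriv_pos fun x => by
    rw [(hasDerivAt_tanh x).deriv, sub_pos]
    exact tanh_sq_lt_one x

theorem tanh_pos {x : ℝ} (hx : 0 < x) : 0 < tanh x :=
  tanh_zero ▸ strictMono_tanh hx

theorem tanh_neg_of_neg {x : ℝ} (hx : x < 0) : tanh x < 0 :=
  tanh_zero ▸ strictMono_tanh hx

theorem tanh_lt_self {x : ℝ} (hx : 0 < x) : tanh x < x := by
  have hderiv (y : ℝ) : HasDerivAt (fun y => y - tanh y) (tanh y ^ 2) y :=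
    ((hasDerivAt_id' y).sub (hasDerivAt_tanh y)).congr_deriv (by ring)
  have hmono : StrictMonoOn (fun y => y - tanh y) (Ici 0) := by
    refine strictMonoOn_of_deriv_pos (convex_Ici 0)
      (fun y _ => (hderiv y).continuousAt.continuousWithinAt) fun y hy => ?_
    rw [interior_Ici] at hy
    exact (hderiv y).deriv ▸ pow_pos (tanh_pos hy) 2
  simpa using hmono self_mem_Ici hx.le hx

end Real

noncomputable def tanhTangent (x t : ℝ) : ℝ :=
  tanh x + (1 - tanh x ^ 2) * (t - x)

theorem tanhTangent_zero (t : ℝ) : tanhTangent 0 t = t := by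
  simp [tanhTangent]

theorem hasDerivAt_tanhTangent (x t : ℝ) :
    HasDerivAt (tanhTangent · t) (-2 * tanh x * (1 - tanh x ^ 2) * (t - x)) x := by
  have hslope : HasDerivAt (fun y => 1 - tanh y ^ 2) (-(2 * tanh x * (1 - tanh x ^ 2))) x := by
    simpa using ((hasDerivAt_tanh x).pow 2).const_sub 1
  have hdist : HasDerivAt (fun y => t - y) (-1) x := by
    simpa using (hasDerivAt_id x).const_sub t
  refine ((hasDerivAt_tanh x).add (hslope.mul hdist)).congr_deriv ?_
  ring

theorem continuous_tanhTangent (t : ℝ) : Continuous (tanhTangent · t) :=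
  continuous_iff_continuousAt.2 fun x => (hasDerivAt_tanhTangent x t).continuousAt

theorem strictMonoOn_tanhTangent {t : ℝ} (ht : 0 ≤ t) : StrictMonoOn (tanhTangent · t) (Iic 0) := by
  refine strictMonoOn_of_deriv_pos (convex_Iic 0) (continuous_tanhTangent t).continuousOn
    fun x hx => ?_
  rw [interior_Iic, mem_Iio] at hx
  rw [(hasDerivAt_tanhTangent x t).deriv]
  have hslope : 0 < 1 - tanh x ^ 2 := sub_pos.2 (tanh_sq_lt_one x)
  have htanh : 0 < -2 * tanh x := by linarith [tanh_neg_of_neg hx]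
  exact mul_pos (mul_pos htanh hslope) (by linarith)

theorem tanhTangent_neg_add_one_nonpos {t : ℝ} (ht : 0 ≤ t) : tanhTangent (-(t + 1)) t ≤ 0 := by
  set a := t + 1
  have ha : 1 ≤ a := by linarith
  have hsinh : a ≤ sinh a := self_le_sinh_iff.2 (by linarith)
  have hcosh : sinh a < cosh a := sinh_lt_cosh a
  -- `2a - 1 ≤ a² ≤ sinh a cosh a`, and `sinh a cosh a = tanh a cosh² a`
  have hkey : 2 * a - 1 ≤ sinh a * cosh a := by nlinarith
  have hcosh_pos := cosh_pos a
  rw [tanhTangent, tanh_neg, neg_sq, one_sub_tanh_sq, tanh_eq_sinh_div_cosh,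
    show t - -a = 2 * a - 1 by ring, ← sub_nonneg]
  field_simp
  nlinarith

theorem tanh_tangency_exists_unique (xU : ℝ) (h : 0 < xU) :
    ∃! xc : ℝ, xc ≤ 0 ∧
      1 - Real.tanh xc ^ 2 = (Real.tanh xU - Real.tanh xc) / (xU - xc) := by
  have hequiv : ∀ x ≤ 0, 1 - tanh x ^ 2 = (tanh xU - tanh x) / (xU - x) ↔
      tanhTangent x xU = tanh xU := fun x hx => by
    rw [eq_div_iff (by linarith), tanhTangent]
    constructor <;> intro <;> linarith
  have hbelow : tanhTangent (-(xU + 1)) xU ≤ tanh xU :=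
    (tanhTangent_neg_add_one_nonpos h.le).trans (tanh_pos h).le
  have habove : tanh xU ≤ tanhTangent 0 xU := (tanhTangent_zero xU).symm ▸ (tanh_lt_self h).le
  obtain ⟨xc, ⟨-, hxc⟩, hxc_eq⟩ := intermediate_value_Icc (by linarith)
    (continuous_tanhTangent xU).continuousOn ⟨hbelow, habove⟩
  refine ⟨xc, ⟨hxc, (hequiv xc hxc).2 hxc_eq⟩, fun y ⟨hy, hy_eq⟩ => ?_⟩
  exact (strictMonoOn_tanhTangent h.le).injOn hy hxc (((hequiv y hy).1 hy_eq).trans hxc_eq.symm)
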